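/- Let q > 8 be odd and suppose 12nβ² ≤ q/4 − 2, where integer matrices M_C and M_S over ℤ satisfy: M_C − M_S = 2F with every entry of F bounded in absolute value by 6nβ². Then for each entry (i,j), applying the extractor φ(x, σ) = (centered(x + σ·(q−1)/2 mod q)) mod 2 with signal σ = σ_b((M_S)_{i,j} mod q) yields φ((M_C)_{i,j} mod q, σ) = φ((M_S)_{i,j} mod q, σ). Hence both parties extract identical bit matrices. -/
import Mathlib


/-- Centered representative of `z` modulo `q`, lying in `[-(q-1)/2, (q-1)/2]` for odd `q > 0`. -/
def cmod (q z : ℤ) : ℤ := (z + (q - 1) / 2) % q - (q - 1) / 2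

/-- Hint function σ₀. -/
def sigma0 (q z : ℤ) : ℤ := if |cmod q z| ≤ q / 4 then 0 else 1

/-- Hint function σ₁. -/
def sigma1 (q z : ℤ) : ℤ :=
  if -(q / 4) + 1 ≤ cmod q z ∧ cmod q z ≤ q / 4 + 1 then 0 else 1

/-- Extractor function φ. -/
def phi (q x σ : ℤ) : ℤ := cmod q (x + σ * ((q - 1) / 2)) % 2

lemma cmod_eq_of (q z c m : ℤ) (hm : q = 2*m+1)
    (hc : (z - c) % q = 0) (h1 : -m ≤ c) (h2 : c ≤ m) : cmod q z = c := by
  have hq1 : (q-1)/2 = m := by omega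
  unfold cmod
  rw [hq1]
  obtain ⟨k, hk⟩ := Int.dvd_of_emod_eq_zero hc
  have hz : z + m = (c + m) + q * k := by linarith
  rw [hz, Int.add_mul_emod_self_left, Int.emod_eq_of_lt (by omega) (by omega)]
  ring

lemma cmod_bounds (q z m : ℤ) (hm : q = 2*m+1) (h0 : 0 ≤ m) :
    -m ≤ cmod q z ∧ cmod q z ≤ m := by
  have hq1 : (q-1)/2 = m := by omega
  unfold cmod
  rw [hq1]
  have h1 := Int.emod_nonneg (z+m) (by omega : q ≠ 0)
  have h2 := Int.emod_lt_of_pos (z+m) (by omega : 0 < q)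
  omega

lemma cmod_congr (q z : ℤ) : (z - cmod q z) % q = 0 := by
  unfold cmod
  have h : z - ((z + (q-1)/2) % q - (q-1)/2) = (z + (q-1)/2) - (z + (q-1)/2) % q := by ring
  rw [h]
  simp [Int.sub_emod, Int.emod_emod_of_dvd]

theorem srp_key_agreement_correctness (q : ℤ) (n : ℕ) (β : ℤ)
    (hq : Odd q) (h8 : 8 < q)
    (hbound : 48 * (n : ℤ) * β ^ 2 ≤ q - 8)
    (MC MS F : Matrix (Fin n) (Fin n) ℤ)
    (hF : MC - MS = 2 • F)
    (hFb : ∀ i j, |F i j| ≤ 6 * n * β ^ 2) :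
    ∀ i j, ∀ σ : ℤ, (σ = sigma0 q (MS i j) ∨ σ = sigma1 q (MS i j)) →
      phi q (MC i j) σ = phi q (MS i j) σ := by
  intro i j σ hσ
  obtain ⟨m, hm⟩ := hq
  have hm' : q = 2*m+1 := by omega
  have h0m : 0 ≤ m := by omega
  have hq1 : (q-1)/2 = m := by omega
  set x := MC i j with hx
  set y := MS i j with hy
  set f := F i j with hf
  have hd : x - y = 2 * f := by
    have := congrFun (congrFun hF i) j
    simpa [hx, hy, hf, Matrix.sub_apply] using this
  have hfb : |f| ≤ 6 * n * β^2 := hFb i j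
  have hfb' : -(q-8) ≤ 8*f ∧ 8*f ≤ q - 8 := by
    have h1 := abs_le.mp hfb
    have h2 : (0:ℤ) ≤ (n:ℤ) * β^2 := by positivity
    constructor <;> nlinarith
  have hb := cmod_bounds q y m hm' h0m
  have hc := cmod_congr q y
  obtain ⟨k, hk⟩ := Int.dvd_of_emod_eq_zero hc
  set c0 := cmod q y with hc0
  have main : ∀ t k1 : ℤ, y + σ*m - t = q * k1 → -m ≤ t → t ≤ m →
      -m ≤ t + 2*f → t + 2*f ≤ m →
      phi q x σ = phi q y σ := by
    intro t k1 h1 h2 h3 h4 h5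
    have e1 : cmod q (y + σ*((q-1)/2)) = t := by
      apply cmod_eq_of q _ t m hm' _ h2 h3
      rw [hq1]
      apply Int.emod_eq_zero_of_dvd
      exact ⟨k1, h1⟩
    have e2 : cmod q (x + σ*((q-1)/2)) = t + 2*f := by
      apply cmod_eq_of q _ _ m hm' _ h4 h5
      rw [hq1]
      apply Int.emod_eq_zero_of_dvd
      refine ⟨k1, ?_⟩
      linarith
    unfold phi
    rw [e1, e2]
    omega
  rcases hσ with hσ0 | hσ0
  · unfold sigma0 at hσ0
    rw [← hc0] at hσ0
    by_cases h : |c0| ≤ q/4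
    · rw [if_pos h] at hσ0
      subst hσ0
      rw [abs_le] at h
      exact main c0 k (by linarith) (by omega) (by omega) (by omega) (by omega)
    · rw [if_neg h] at hσ0
      subst hσ0
      rw [not_le, lt_abs] at h
      rcases h with h | h
      · exact main (c0 - m - 1) (k + 1) (by linarith) (by omega) (by omega) (by omega) (by omega)
      · exact main (c0 + m) k (by linarith) (by omega) (by omega) (by omega) (by omega)
  · unfold sigma1 at hσ0
    rw [← hc0] at hσ0
    by_cases h : -(q / 4) + 1 ≤ c0 ∧ c0 ≤ q / 4 + 1
    · rw [if_pos h] at hσ0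
      subst hσ0
      exact main c0 k (by linarith) (by omega) (by omega) (by omega) (by omega)
    · rw [if_neg h] at hσ0
      subst hσ0
      rw [not_and_or, not_le, not_le] at h
      rcases h with h | h
      · exact main (c0 + m) k (by linarith) (by omega) (by omega) (by omega) (by omega)
      · exact main (c0 - m - 1) (k + 1) (by linarith) (by omega) (by omega) (by omega) (by omega)
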